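/- arXiv:math/0608186 — 4 statements merged into one kernel-verified Lean document; each statement's English description precedes it below -/
import Mathlib

section
/- For every real number x with 0 < x < π/2, log(sec x) = ∑_{k=1}^∞ (2^{2k}(2^{2k}-1)|B_{2k}| / (2k·(2k)!)) · x^{2k}, where B_n denotes the n-th Bernoulli number. -/
/-!
Taking logarithms in Euler's product `sin (π x) = π x ∏ (1 - x² / k²)` and expanding every
`-log (1 - t)` as `∑ tⁿ / n`, an exchange of summation (all terms are nonnegative) gives
`-log (sin y / y) = ∑ ζ(2n) / n · (y / π)^(2n)` for `0 < y < π`. As `sin 2x = 2 sin x cos x`,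
`log sec x` is the difference of this series at `2x` and at `x`, and Euler's evaluation of
`ζ(2n)` in terms of `B_{2n}` turns the coefficients into the stated ones; the sign of `B_{2n}`
is read off from `ζ(2n) > 0`.
-/

open Real

/-- Euler's closed form of `ζ(2m)`; it equals `ζ(2m)` only for `m ≠ 0`. -/
noncomputable def zetaTwoMul (m : ℕ) : ℝ :=
  (-1) ^ (m + 1) * 2 ^ (2 * m - 1) * π ^ (2 * m) * bernoulli (2 * m) / (2 * m).factorial

lemma hasSum_one_div_succ_pow_zetaTwoMul {m : ℕ} (hm : m ≠ 0) :
    HasSum (fun k : ℕ => 1 / ((k : ℝ) + 1) ^ (2 * m)) (zetaTwoMul m) := by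
  simpa [hm, zetaTwoMul] using (hasSum_nat_add_iff' 1).mpr (hasSum_zeta_nat hm)

lemma one_le_zetaTwoMul {m : ℕ} (hm : m ≠ 0) : 1 ≤ zetaTwoMul m := by
  simpa using le_hasSum (hasSum_one_div_succ_pow_zetaTwoMul hm) 0 fun _ _ => by positivity

lemma abs_bernoulli_two_mul {m : ℕ} (hm : m ≠ 0) :
    |(bernoulli (2 * m) : ℝ)| = (-1) ^ (m + 1) * bernoulli (2 * m) := by
  have hpos : 0 < (-1) ^ (m + 1) * (bernoulli (2 * m) : ℝ) := by
    have hζ : zetaTwoMul m = (-1) ^ (m + 1) * (bernoulli (2 * m) : ℝ) *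
        (2 ^ (2 * m - 1) * π ^ (2 * m) / (2 * m).factorial) := by
      unfold zetaTwoMul; ring
    have hc : 0 < 2 ^ (2 * m - 1) * π ^ (2 * m) / ((2 * m).factorial : ℝ) := by positivity
    nlinarith [one_le_zetaTwoMul hm]
  rw [← abs_of_pos hpos, abs_mul, abs_pow, abs_neg, abs_one, one_pow, one_mul]

lemma hasSum_tsum_pow_div_of_hasSum_neg_log {ι : Type*} {t : ι → ℝ} {s : ℝ}
    (ht₀ : ∀ k, 0 ≤ t k) (ht₁ : ∀ k, t k < 1) (hs : HasSum (fun k => -log (1 - t k)) s) :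
    HasSum (fun n : ℕ => ∑' k, t k ^ (n + 1) / (n + 1)) s := by
  have hlog (k : ι) : HasSum (fun n : ℕ => t k ^ (n + 1) / (n + 1)) (-log (1 - t k)) := by
    simpa using hasSum_pow_div_log_of_abs_lt_one (abs_lt.2 ⟨by linarith [ht₀ k], ht₁ k⟩)
  set F : ι × ℕ → ℝ := fun p => t p.1 ^ (p.2 + 1) / (p.2 + 1)
  have hF : Summable F :=
    (summable_prod_of_nonneg fun p => by have := ht₀ p.1; positivity).2
      ⟨fun k => (hlog k).summable, hs.summable.congr fun k => (hlog k).tsum_eq.symm⟩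
  have hFs : HasSum F s := by
    rw [hF.hasSum_iff, hF.tsum_prod, ← hs.tsum_eq]
    exact tsum_congr fun k => (hlog k).tsum_eq
  have hswap := (Equiv.prodComm ℕ ι).hasSum_iff.2 hFs
  exact hswap.prod_fiberwise fun n => (hswap.summable.prod_factor n).hasSum

lemma sq_div_succ_sq_lt_one {x : ℝ} (hx : x ^ 2 < 1) (k : ℕ) :
    x ^ 2 / ((k : ℝ) + 1) ^ 2 < 1 := by
  rw [div_lt_one (by positivity)]
  nlinarith [(k.cast_nonneg : (0 : ℝ) ≤ k)]

lemma hasSum_neg_log_euler_sin_prod {x : ℝ} (hx₀ : 0 < x) (hx₁ : x < 1) :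
    HasSum (fun k : ℕ => -log (1 - x ^ 2 / ((k : ℝ) + 1) ^ 2))
      (-log (sin (π * x) / (π * x))) := by
  have hfac (k : ℕ) :
      0 < 1 - x ^ 2 / ((k : ℝ) + 1) ^ 2 ∧ 1 - x ^ 2 / ((k : ℝ) + 1) ^ 2 ≤ 1 := by
    have := sq_div_succ_sq_lt_one (x := x) (by nlinarith) k
    exact ⟨by linarith, by linarith [show 0 ≤ x ^ 2 / ((k : ℝ) + 1) ^ 2 by positivity]⟩
  have hπx : 0 < π * x := by positivity
  have hsinc : 0 < sin (π * x) / (π * x) :=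
    div_pos (sin_pos_of_pos_of_lt_pi hπx (by nlinarith [pi_pos])) hπx
  have hprod := ((tendsto_euler_sin_prod x).div_const (π * x)).log hsinc.ne' |>.neg
  refine (hasSum_iff_tendsto_nat_of_nonneg (fun k => ?_) _).2 (hprod.congr fun n => ?_)
  · exact neg_nonneg.2 (log_nonpos (hfac k).1.le (hfac k).2)
  · rw [mul_div_cancel_left₀ _ hπx.ne', log_prod fun k _ => (hfac k).1.ne',
      ← Finset.sum_neg_distrib]

lemma hasSum_neg_log_sin_div {y : ℝ} (hy₀ : 0 < y) (hy : y < π) :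
    HasSum (fun n : ℕ => zetaTwoMul (n + 1) / (n + 1) * (y / π) ^ (2 * (n + 1)))
      (-log (sin y / y)) := by
  have hx₀ : 0 < y / π := div_pos hy₀ pi_pos
  have hx₁ : y / π < 1 := (div_lt_one pi_pos).2 hy
  have hlog := hasSum_neg_log_euler_sin_prod hx₀ hx₁
  rw [mul_div_cancel₀ _ pi_ne_zero] at hlog
  refine (hasSum_tsum_pow_div_of_hasSum_neg_log (fun k => by positivity) (fun k => ?_)
    hlog).congr_fun fun n => ?_
  · exact sq_div_succ_sq_lt_one (by nlinarith) k
  · rw [show zetaTwoMul (n + 1) / (n + 1) * (y / π) ^ (2 * (n + 1)) =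
        (y / π) ^ (2 * (n + 1)) / (n + 1) * zetaTwoMul (n + 1) by ring,
      ← ((hasSum_one_div_succ_pow_zetaTwoMul (m := n + 1) n.succ_ne_zero).mul_left _).tsum_eq]
    congr with k
    rw [div_pow ((y / π) ^ 2), ← pow_mul, ← pow_mul]
    ring

lemma log_one_div_cos_eq {x : ℝ} (hsin : sin x ≠ 0) (hcos : cos x ≠ 0) :
    log (1 / cos x) = -log (sin (2 * x) / (2 * x)) - -log (sin x / x) := by
  have hx : x ≠ 0 := by rintro rfl; simp at hsin
  rw [sin_two_mul, neg_sub_neg, ← log_div (by positivity) (by positivity)]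
  congr 1
  field_simp

lemma zetaTwoMul_div_mul_sub {m : ℕ} (hm : m ≠ 0) (x : ℝ) :
    zetaTwoMul m / m * ((2 * x / π) ^ (2 * m) - (x / π) ^ (2 * m)) =
      2 ^ (2 * m) * (2 ^ (2 * m) - 1) * |(bernoulli (2 * m) : ℝ)| /
        ((2 * m : ℕ) * (2 * m).factorial) * x ^ (2 * m) := by
  have h2 : (2 : ℝ) ^ (2 * m) = 2 ^ (2 * m - 1) * 2 := by
    rw [← pow_succ, Nat.sub_add_cancel (by omega)]
  rw [abs_bernoulli_two_mul hm, zetaTwoMul, div_pow, div_pow, mul_pow, h2]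
  have : (m : ℝ) ≠ 0 := by exact_mod_cast hm
  push_cast
  field_simp

theorem logSec_series (x : ℝ) (hx : 0 < x) (hx2 : x < π / 2) :
    Real.log (1 / Real.cos x) =
      ∑' k : ℕ,
        (2 ^ (2 * (k + 1)) * (2 ^ (2 * (k + 1)) - 1) * |((bernoulli (2 * (k + 1)) : ℚ) : ℝ)| /
            ((2 * (k + 1) : ℕ) * (Nat.factorial (2 * (k + 1)) : ℝ))) *
          x ^ (2 * (k + 1)) := by
  have hxπ : x < π := by linarith [pi_pos]
  have hcos : cos x ≠ 0 := (cos_pos_of_mem_Ioo ⟨by linarith, hx2⟩).ne'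
  have hsin : sin x ≠ 0 := (sin_pos_of_pos_of_lt_pi hx hxπ).ne'
  have hseries := (hasSum_neg_log_sin_div (y := 2 * x) (by positivity) (by linarith)).sub
    (hasSum_neg_log_sin_div hx hxπ)
  rw [log_one_div_cos_eq hsin hcos, ← hseries.tsum_eq]
  refine tsum_congr fun k => ?_
  rw [← mul_sub, ← zetaTwoMul_div_mul_sub k.succ_ne_zero, Nat.cast_succ]
end

section
/- The infinite product ∏_{k=3}^∞ cos(π/k) over all integers k ≥ 3 converges to a positive real number (the Kepler–Bouwkamp constant). -/
/-!
For `k ≥ 3` the factor `cos (π / k)` is positive and `1 - cos (π / k) ≤ π ^ 2 / (2 k ^ 2)`,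
so the logarithms of the factors form a summable series; the product converges to the exponential
of its sum, which is positive.
-/

open Real Filter Finset

lemma cos_pi_div_pos {x : ℝ} (hx : 2 < x) : 0 < cos (π / x) := by
  apply cos_pos_of_mem_Ioo
  constructor
  · linarith [pi_pos, div_pos pi_pos (by linarith : (0 : ℝ) < x)]
  · rw [div_lt_div_iff₀ (by linarith) two_pos]
    nlinarith [pi_pos]

lemma summable_cos_sub_one {ι : Type*} {x : ι → ℝ} (hx : Summable fun i ↦ x i ^ 2) :
    Summable fun i ↦ cos (x i) - 1 := by
  refine (hx.div_const 2).of_norm_bounded fun i ↦ ?_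
  rw [Real.norm_eq_abs, abs_of_nonpos (by linarith [cos_le_one (x i)])]
  linarith [one_sub_sq_div_two_le_cos (x := x i)]

lemma summable_div_nat_add_sq (a : ℝ) (m : ℕ) :
    Summable fun k : ℕ ↦ (a / (k + m)) ^ 2 := by
  have h := ((summable_nat_add_iff m).mpr (summable_one_div_nat_pow.mpr one_lt_two)).mul_left
    (a ^ 2)
  refine h.congr fun k ↦ ?_
  push_cast
  rw [div_pow, mul_one_div]

lemma exists_pos_hasProd_cos_pi_div_nat_add_three :
    ∃ L, 0 < L ∧ HasProd (fun k : ℕ ↦ cos (π / (k + 3))) L := by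
  have hpos (k : ℕ) : 0 < cos (π / (k + 3)) :=
    cos_pi_div_pos (by linarith [(k.cast_nonneg : (0 : ℝ) ≤ k)])
  have hlog : Summable fun k : ℕ ↦ log (cos (π / (k + 3))) := by
    simpa using Real.summable_log_one_add_of_summable
      (summable_cos_sub_one (summable_div_nat_add_sq π 3))
  exact ⟨_, exp_pos _, hasProd_of_hasSum_log hpos hlog.hasSum⟩

lemma prod_Icc_eq_prod_range {M : Type*} [CommMonoid M] (f : ℕ → M) (m n : ℕ) :
    ∏ k ∈ Icc m n, f k = ∏ k ∈ range (n + 1 - m), f (m + k) := by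
  rw [← Ico_add_one_right_eq_Icc, prod_Ico_eq_prod_range]

theorem keplerBouwkamp_converges :
    ∃ L : ℝ, 0 < L ∧
      Tendsto (fun n : ℕ => ∏ k ∈ Finset.Icc 3 n, Real.cos (π / k)) atTop (nhds L) := by
  obtain ⟨L, hL, hprod⟩ := exists_pos_hasProd_cos_pi_div_nat_add_three
  refine ⟨L, hL, (hprod.tendsto_prod_nat.comp (tendsto_sub_atTop_nat 2)).congr fun n ↦ ?_⟩
  rw [Function.comp_apply, prod_Icc_eq_prod_range, show n + 1 - 3 = n - 2 by omega]
  push_cast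
  simp only [add_comm]
end

section
/- For every real s > 1, the prime zeta function satisfies P(s) = ∑_{k=1}^∞ μ(k)·log(ζ(sk))/k, where μ is the Möbius function and ζ the Riemann zeta function. -/
/-!
Expanding `log ζ(sk)` by the Euler product and `-log (1 - y) = ∑ₙ yⁿ / n` turns the right-hand
side into the absolutely convergent triple sum `∑ₚ ∑ₖ ∑ₙ μ(k) p^(-skn) / (kn)`. For a fixed prime,
grouping the terms by `m = kn` gives `∑ₘ p^(-sm) / m · ∑_{k ∣ m} μ(k)`, and only `m = 1` survives.
-/

open Real

open ArithmeticFunction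
open scoped ArithmeticFunction.Moebius

theorem sum_divisors_moebius (n : ℕ) : ∑ d ∈ n.divisors, μ d = if n = 1 then 1 else 0 := by
  rw [← coe_mul_zeta_apply, moebius_mul_coe_zeta, one_apply]

theorem tsum_moebius_smul_apply_mul {E : Type*} [AddCommGroup E] [TopologicalSpace E]
    [IsTopologicalAddGroup E] [T2Space E] (f : ℕ → E)
    (hf : Summable fun c : ℕ+ × ℕ+ => μ c.1 • f (c.1 * c.2)) :
    ∑' c : ℕ+ × ℕ+, μ c.1 • f (c.1 * c.2) = f 1 := by
  have hfiber (n : ℕ+) : ∑' d : (n : ℕ).divisorsAntidiagonal, μ d.1.1 • f (d.1.1 * d.1.2) =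
      if n = 1 then f 1 else 0 := by
    rw [Finset.tsum_subtype (f := fun d : ℕ × ℕ => μ d.1 • f (d.1 * d.2)),
      Finset.sum_congr rfl fun d hd => by rw [(Nat.mem_divisorsAntidiagonal.mp hd).1],
      ← Finset.sum_smul, Nat.sum_divisorsAntidiagonal (fun a _ => μ a), sum_divisors_moebius]
    split_ifs <;> simp_all [← PNat.coe_eq_one_iff]
  calc _ = ∑' x, μ (sigmaAntidiagonalEquivProd x).1 •
        f ((sigmaAntidiagonalEquivProd x).1 * (sigmaAntidiagonalEquivProd x).2) :=
        (sigmaAntidiagonalEquivProd.tsum_eq _).symm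
    _ = ∑' (n : ℕ+) (d : (n : ℕ).divisorsAntidiagonal), μ d.1.1 • f (d.1.1 * d.1.2) :=
        (sigmaAntidiagonalEquivProd.summable_iff.mpr hf).tsum_sigma' fun _ => .of_finite
    _ = f 1 := (tsum_congr hfiber).trans (tsum_ite_eq 1 _)

theorem abs_moebius_mul_pow_div_le {x : ℝ} (hx : |x| ≤ 1) (k n : ℕ) :
    |(μ (k + 1) : ℝ) * (x ^ ((k + 1) * (n + 1)) / ((k + 1) * (n + 1) : ℕ))| ≤
      |x| ^ k * |x| ^ n := by
  have hμ : |(μ (k + 1) : ℝ)| ≤ 1 := mod_cast abs_moebius_le_one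
  have hm : (1 : ℝ) ≤ ((k + 1) * (n + 1) : ℕ) :=
    mod_cast Nat.one_le_iff_ne_zero.mpr (by positivity)
  rw [abs_mul, abs_div, abs_pow, Nat.abs_cast, ← pow_add]
  calc |(μ (k + 1) : ℝ)| * (|x| ^ ((k + 1) * (n + 1)) / ((k + 1) * (n + 1) : ℕ))
      ≤ 1 * (|x| ^ ((k + 1) * (n + 1)) / 1) := by gcongr
    _ ≤ |x| ^ (k + n) := by
      rw [one_mul, div_one]
      exact pow_le_pow_of_le_one (abs_nonneg x) hx (by nlinarith)

theorem tsum_moebius_mul_neg_log_one_sub_pow {x : ℝ} (hx : |x| < 1) :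
    ∑' k : ℕ, (μ (k + 1) : ℝ) * -log (1 - x ^ (k + 1)) / ((k : ℝ) + 1) = x := by
  let f : ℕ → ℝ := fun m => x ^ m / m
  have hgeom : Summable fun n : ℕ => |x| ^ n := summable_geometric_of_lt_one (abs_nonneg x) hx
  have hsum : Summable fun kn : ℕ × ℕ => (μ (kn.1 + 1) : ℝ) * f ((kn.1 + 1) * (kn.2 + 1)) :=
    (hgeom.mul_of_nonneg hgeom (fun _ => by positivity) fun _ => by positivity).of_norm_bounded
      fun kn => abs_moebius_mul_pow_div_le hx.le kn.1 kn.2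
  have hrow (k : ℕ) : (μ (k + 1) : ℝ) * -log (1 - x ^ (k + 1)) / ((k : ℝ) + 1) =
      ∑' n : ℕ, (μ (k + 1) : ℝ) * f ((k + 1) * (n + 1)) := by
    have hxk : |x ^ (k + 1)| < 1 := by
      rw [abs_pow]; exact pow_lt_one₀ (abs_nonneg x) hx (by omega)
    rw [← (hasSum_pow_div_log_of_abs_lt_one hxk).tsum_eq, mul_div_right_comm, ← tsum_mul_left]
    refine tsum_congr fun n => ?_
    simp only [f, ← pow_mul]
    push_cast
    field_simp
  let e : ℕ+ × ℕ+ ≃ ℕ × ℕ := Equiv.pnatEquivNat.prodCongr Equiv.pnatEquivNat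
  calc _ = ∑' k : ℕ, ∑' n : ℕ, (μ (k + 1) : ℝ) * f ((k + 1) * (n + 1)) := tsum_congr hrow
    _ = ∑' kn : ℕ × ℕ, (μ (kn.1 + 1) : ℝ) * f ((kn.1 + 1) * (kn.2 + 1)) := hsum.tsum_prod.symm
    _ = ∑' c : ℕ+ × ℕ+, μ c.1 • f (c.1 * c.2) := by
      simp only [zsmul_eq_mul]
      exact e.symm.tsum_eq fun c : ℕ+ × ℕ+ => (μ c.1 : ℝ) * f (c.1 * c.2)
    _ = x := by
      rw [tsum_moebius_smul_apply_mul f]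
      · simp [f]
      · simpa only [zsmul_eq_mul] using
          (e.symm.summable_iff (f := fun c : ℕ+ × ℕ+ => (μ c.1 : ℝ) * f (c.1 * c.2))).mp hsum

theorem exp_tsum_primes_neg_log_one_sub_rpow {t : ℝ} (ht : 1 < t) :
    rexp (∑' p : Nat.Primes, -log (1 - (p : ℝ) ^ (-t))) = ∑' m : ℕ, ((m : ℝ) + 1) ^ (-t) := by
  have ht' : 1 < (t : ℂ).re := by simpa using ht
  have hcpow (n : ℕ) : (n : ℂ) ^ (-(t : ℂ)) = (((n : ℝ) ^ (-t) : ℝ) : ℂ) := by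
    rw [Complex.ofReal_cpow n.cast_nonneg]; push_cast; rfl
  have hlog (p : Nat.Primes) : -Complex.log (1 - (p : ℂ) ^ (-(t : ℂ))) =
      ((-log (1 - (p : ℝ) ^ (-t)) : ℝ) : ℂ) := by
    have hp : (p : ℝ) ^ (-t) < 1 :=
      rpow_lt_one_of_one_lt_of_neg (mod_cast p.prop.one_lt) (by linarith)
    rw [hcpow, Complex.ofReal_neg, Complex.ofReal_log (by linarith), Complex.ofReal_sub,
      Complex.ofReal_one]
  apply Complex.ofReal_injective
  rw [Complex.ofReal_exp, Complex.ofReal_tsum, ← tsum_congr hlog,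
    riemannZeta_eulerProduct_exp_log ht', zeta_eq_tsum_one_div_nat_add_one_cpow ht',
    Complex.ofReal_tsum]
  refine tsum_congr fun m => ?_
  rw [one_div, ← Complex.cpow_neg, ← Nat.cast_succ, hcpow]
  push_cast; rfl

theorem log_tsum_add_one_rpow_neg {t : ℝ} (ht : 1 < t) :
    log (∑' m : ℕ, ((m : ℝ) + 1) ^ (-t)) = ∑' p : Nat.Primes, -log (1 - (p : ℝ) ^ (-t)) := by
  rw [← exp_tsum_primes_neg_log_one_sub_rpow ht, log_exp]

theorem neg_log_one_sub_le_two_mul {y : ℝ} (hy₀ : 0 ≤ y) (hy : y ≤ 1 / 2) :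
    -log (1 - y) ≤ 2 * y := by
  have hlog := one_sub_inv_le_log_of_pos (show 0 < 1 - y by linarith)
  have hinv : (1 - y)⁻¹ ≤ 1 + 2 * y := by
    rw [inv_le_iff_one_le_mul₀ (by linarith)]; nlinarith
  linarith

theorem rpow_neg_le_half {a t : ℝ} (ha : 2 ≤ a) (ht : 1 ≤ t) : a ^ (-t) ≤ 1 / 2 :=
  calc a ^ (-t) ≤ a ^ (-1 : ℝ) := rpow_le_rpow_of_exponent_le (by linarith) (by linarith)
    _ ≤ 1 / 2 := by rw [rpow_neg_one, one_div]; exact inv_anti₀ two_pos ha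

theorem summable_moebius_mul_neg_log_one_sub_pow {ι : Type*} {x : ι → ℝ} (hx : Summable x)
    (hx₀ : ∀ i, 0 ≤ x i) (hx₁ : ∀ i, x i ≤ 1 / 2) :
    Summable fun ki : ℕ × ι =>
      (μ (ki.1 + 1) : ℝ) * -log (1 - x ki.2 ^ (ki.1 + 1)) / ((ki.1 : ℝ) + 1) := by
  have hgeom : Summable fun k : ℕ => (1 / 2 : ℝ) ^ k :=
    summable_geometric_of_lt_one (by norm_num) (by norm_num)
  refine ((hgeom.mul_of_nonneg hx (fun _ => by positivity) hx₀).mul_left 2).of_norm_bounded ?_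
  rintro ⟨k, i⟩
  have hxi : x i ≤ 1 := (hx₁ i).trans (by norm_num)
  have hy : x i ^ (k + 1) ≤ (1 / 2) ^ k * x i := by
    rw [pow_succ]
    exact mul_le_mul_of_nonneg_right (pow_le_pow_left₀ (hx₀ i) (hx₁ i) k) (hx₀ i)
  have hy₁ : x i ^ (k + 1) ≤ 1 / 2 := (pow_le_of_le_one (hx₀ i) hxi k.succ_ne_zero).trans (hx₁ i)
  have hlog : 0 ≤ -log (1 - x i ^ (k + 1)) :=
    neg_nonneg.mpr (log_nonpos (by linarith) (by linarith [pow_nonneg (hx₀ i) (k + 1)]))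
  have hμ : |(μ (k + 1) : ℝ)| ≤ 1 := mod_cast abs_moebius_le_one
  rw [norm_div, norm_mul, Real.norm_eq_abs, Real.norm_of_nonneg hlog,
    Real.norm_of_nonneg (by positivity : (0 : ℝ) ≤ k + 1)]
  calc |(μ (k + 1) : ℝ)| * -log (1 - x i ^ (k + 1)) / ((k : ℝ) + 1)
      ≤ 1 * -log (1 - x i ^ (k + 1)) / 1 := by gcongr; linarith [k.cast_nonneg (α := ℝ)]
    _ ≤ 2 * ((1 / 2) ^ k * x i) := by
        rw [one_mul, div_one]
        linarith [neg_log_one_sub_le_two_mul (pow_nonneg (hx₀ i) (k + 1)) hy₁]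

theorem primeZeta_eq_moebius_sum (s : ℝ) (hs : 1 < s) :
    (∑' p : Nat.Primes, ((p : ℕ) : ℝ) ^ (-s)) =
      ∑' k : ℕ,
        ((ArithmeticFunction.moebius (k + 1) : ℤ) : ℝ) *
          Real.log (∑' m : ℕ, ((m : ℝ) + 1) ^ (-(s * ((k : ℝ) + 1)))) / ((k : ℝ) + 1) := by
  have hx₀ (p : Nat.Primes) : 0 ≤ (p : ℝ) ^ (-s) := by positivity
  have hx₁ (p : Nat.Primes) : (p : ℝ) ^ (-s) ≤ 1 / 2 :=
    rpow_neg_le_half (mod_cast p.prop.two_le) hs.le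
  have hsum := summable_moebius_mul_neg_log_one_sub_pow
    (Nat.Primes.summable_rpow.mpr (by linarith)) hx₀ hx₁
  have hpow (p : Nat.Primes) (k : ℕ) :
      ((p : ℝ) ^ (-s)) ^ (k + 1) = (p : ℝ) ^ (-(s * ((k : ℝ) + 1))) := by
    rw [← rpow_mul_natCast (by positivity)]
    congr 1
    push_cast
    ring
  calc ∑' p : Nat.Primes, (p : ℝ) ^ (-s)
      = ∑' (p : Nat.Primes) (k : ℕ),
          (μ (k + 1) : ℝ) * -log (1 - ((p : ℝ) ^ (-s)) ^ (k + 1)) / ((k : ℝ) + 1) :=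
        tsum_congr fun p => (tsum_moebius_mul_neg_log_one_sub_pow <| by
          rw [abs_of_nonneg (hx₀ p)]; linarith [hx₁ p]).symm
    _ = ∑' (k : ℕ) (p : Nat.Primes),
          (μ (k + 1) : ℝ) * -log (1 - ((p : ℝ) ^ (-s)) ^ (k + 1)) / ((k : ℝ) + 1) :=
        hsum.tsum_comm
    _ = _ := tsum_congr fun k => by
        have hsk : 1 < s * ((k : ℝ) + 1) := by nlinarith [k.cast_nonneg (α := ℝ)]
        simp only [hpow, log_tsum_add_one_rpow_neg hsk, tsum_div_const, tsum_mul_left]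
end

section
/- The product ∏_{p prime, p≥3} cos(π/p) lies strictly between 0.31 and 0.32. -/
set_option maxRecDepth 8000
set_option linter.unnecessarySeqFocus false
open Real Filter


lemma cos_lb_direct (p : ℝ) (hp : 4 ≤ p) (a : ℝ)
    (ha : a ≤ 1 - (3.141593/p)^2/2 - (3.141593/p)^4 * (5/96)) :
    a ≤ Real.cos (π / p) := by
  have hp0 : (0:ℝ) < p := by linarith
  have hπu : π < 3.141593 := pi_lt_d6
  have hx0 : 0 < π / p := div_pos pi_pos hp0
  have hxu : π / p ≤ 3.141593 / p := by gcongr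
  have hu1 : (3.141593:ℝ)/p ≤ 1 := by rw [div_le_one hp0]; linarith
  have hx1 : |π / p| ≤ 1 := by rw [abs_of_pos hx0]; linarith
  have hb := abs_le.1 (Real.cos_bound hx1)
  have h2 : (π/p)^2 ≤ (3.141593/p)^2 := by gcongr
  have h4 : |π/p|^4 ≤ (3.141593/p)^4 := by rw [abs_of_pos hx0]; gcongr
  nlinarith [hb.1, hb.2]

lemma cos_ub_direct (p : ℝ) (hp : 4 ≤ p) (b : ℝ)
    (hb : 1 - (3.141592/p)^2/2 + (3.141593/p)^4 * (5/96) ≤ b) :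
    Real.cos (π / p) ≤ b := by
  have hp0 : (0:ℝ) < p := by linarith
  have hπu : π < 3.141593 := pi_lt_d6
  have hπl : (3.141592:ℝ) < π := pi_gt_d6
  have hx0 : 0 < π / p := div_pos pi_pos hp0
  have hxu : π / p ≤ 3.141593 / p := by gcongr
  have hu1 : (3.141593:ℝ)/p ≤ 1 := by rw [div_le_one hp0]; linarith
  have hx1 : |π / p| ≤ 1 := by rw [abs_of_pos hx0]; linarith
  have hb2 := abs_le.1 (Real.cos_bound hx1)
  have h2 : (3.141592/p)^2 ≤ (π/p)^2 := by gcongr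
  have h4 : |π/p|^4 ≤ (3.141593/p)^4 := by rw [abs_of_pos hx0]; gcongr
  nlinarith [hb2.1, hb2.2]

-- half-angle versions, for 7 ≤ p ≤ 13 (but stated generally)
lemma cos_lb_half (p : ℝ) (hp : 4 ≤ p) (a : ℝ)
    (ha : a ≤ 1 - 2 * (3.141593/(2*p) - (3.141592/(2*p))^3/6 + (3.141593/(2*p))^4 * (5/96))^2) :
    a ≤ Real.cos (π / p) := by
  have hp0 : (0:ℝ) < p := by linarith
  have hπu : π < 3.141593 := pi_lt_d6
  have hπl : (3.141592:ℝ) < π := pi_gt_d6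
  set y := π / (2*p) with hy
  have h2y : Real.cos (π / p) = 1 - 2 * Real.sin y ^ 2 := by
    have : π / p = 2 * y := by rw [hy]; field_simp
    rw [this, Real.cos_two_mul', Real.cos_sq']; ring
  have hy0 : 0 < y := div_pos pi_pos (by linarith)
  have hyu : y ≤ 3.141593 / (2*p) := by rw [hy]; gcongr
  have hyl : 3.141592 / (2*p) ≤ y := by rw [hy]; gcongr
  have hu1 : (3.141593:ℝ)/(2*p) ≤ 1 := by rw [div_le_one (by linarith)]; linarith
  have hy1 : |y| ≤ 1 := by rw [abs_of_pos hy0]; linarith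
  have hsb := abs_le.1 (Real.sin_bound hy1)
  have h3 : (3.141592/(2*p))^3 ≤ y^3 := by gcongr
  have h4 : |y|^4 ≤ (3.141593/(2*p))^4 := by rw [abs_of_pos hy0]; gcongr
  have hs_le : Real.sin y ≤ 3.141593/(2*p) - (3.141592/(2*p))^3/6 + (3.141593/(2*p))^4 * (5/96) := by
    nlinarith [hsb.2, h4, pow_le_pow_of_le_one (abs_nonneg y) hy1 (by norm_num : 4 ≤ 5), pow_nonneg (abs_nonneg y) 4]
  have hs0 : 0 ≤ Real.sin y := Real.sin_nonneg_of_nonneg_of_le_pi hy0.le (by nlinarith)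
  rw [h2y]
  nlinarith [hs_le, hs0]

lemma cos_ub_half (p : ℝ) (hp : 4 ≤ p) (b : ℝ)
    (h0 : 0 ≤ 3.141592/(2*p) - (3.141593/(2*p))^3/6 - (3.141593/(2*p))^4 * (5/96))
    (hb : 1 - 2 * (3.141592/(2*p) - (3.141593/(2*p))^3/6 - (3.141593/(2*p))^4 * (5/96))^2 ≤ b) :
    Real.cos (π / p) ≤ b := by
  have hp0 : (0:ℝ) < p := by linarith
  have hπu : π < 3.141593 := pi_lt_d6
  have hπl : (3.141592:ℝ) < π := pi_gt_d6
  set y := π / (2*p) with hy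
  have h2y : Real.cos (π / p) = 1 - 2 * Real.sin y ^ 2 := by
    have : π / p = 2 * y := by rw [hy]; field_simp
    rw [this, Real.cos_two_mul', Real.cos_sq']; ring
  have hy0 : 0 < y := div_pos pi_pos (by linarith)
  have hyu : y ≤ 3.141593 / (2*p) := by rw [hy]; gcongr
  have hyl : 3.141592 / (2*p) ≤ y := by rw [hy]; gcongr
  have hu1 : (3.141593:ℝ)/(2*p) ≤ 1 := by rw [div_le_one (by linarith)]; linarith
  have hy1 : |y| ≤ 1 := by rw [abs_of_pos hy0]; linarith
  have hsb := abs_le.1 (Real.sin_bound hy1)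
  have h3 : y^3 ≤ (3.141593/(2*p))^3 := by gcongr
  have h4 : |y|^4 ≤ (3.141593/(2*p))^4 := by rw [abs_of_pos hy0]; gcongr
  have hs_ge : 3.141592/(2*p) - (3.141593/(2*p))^3/6 - (3.141593/(2*p))^4 * (5/96) ≤ Real.sin y := by
    nlinarith [hsb.1, h4, pow_le_pow_of_le_one (abs_nonneg y) hy1 (by norm_num : 4 ≤ 5), pow_nonneg (abs_nonneg y) 4]
  rw [h2y]
  nlinarith [hs_ge, h0]

private noncomputable def F (n : ℕ) : ℝ :=
  ∏ p ∈ (Finset.range n).filter (fun p => p.Prime ∧ 3 ≤ p), Real.cos (π / p)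

private lemma cos_nn (p : ℝ) (hp : 3 ≤ p) : 0 ≤ Real.cos (π/p) := by
  apply Real.cos_nonneg_of_mem_Icc
  constructor
  · have : 0 ≤ π / p := by positivity
    linarith [pi_pos]
  · calc π / p ≤ π / 3 := by gcongr
      _ ≤ π / 2 := by gcongr <;> norm_num [pi_pos.le]

private lemma one_sub_sum_le_prod' (s : Finset ℕ) (e : ℕ → ℝ) (h0 : ∀ i ∈ s, 0 ≤ e i)
    (h1 : ∀ i ∈ s, e i ≤ 1) :
    1 - ∑ i ∈ s, e i ≤ ∏ i ∈ s, (1 - e i) := by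
  classical
  induction s using Finset.induction with
  | empty => simp
  | @insert a s hx ih =>
    rw [Finset.prod_insert hx, Finset.sum_insert hx]
    have h0' : ∀ i ∈ s, 0 ≤ e i := fun i hi => h0 i (Finset.mem_insert_of_mem hi)
    have h1' : ∀ i ∈ s, e i ≤ 1 := fun i hi => h1 i (Finset.mem_insert_of_mem hi)
    have ihh := ih h0' h1'
    have ea0 : 0 ≤ e a := h0 a (Finset.mem_insert_self a s)
    have ea1 : e a ≤ 1 := h1 a (Finset.mem_insert_self a s)
    have hs0 : 0 ≤ ∑ i ∈ s, e i := Finset.sum_nonneg h0'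
    nlinarith

private lemma sum_inv_sq_le' (T : Finset ℕ) (h : ∀ p ∈ T, 257 ≤ p ∧ p % 2 = 1) :
    ∑ p ∈ T, 1/(p:ℝ)^2 ≤ 1/512 := by
  classical
  set g : ℕ → ℝ := fun k => 1/(4*(k:ℝ)) - 1/(4*((k:ℝ)+1)) with hg
  have step1 : ∑ p ∈ T, 1/(p:ℝ)^2 ≤ ∑ p ∈ T, g (p/2) := by
    apply Finset.sum_le_sum
    intro p hp
    obtain ⟨h257, hodd⟩ := h p hp
    have hk : 128 ≤ p/2 := by omega
    have hpk : p = 2*(p/2) + 1 := by omega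
    have hkR : (128:ℝ) ≤ (p/2 : ℕ) := by exact_mod_cast hk
    have hpR : (p:ℝ) = 2*((p/2 : ℕ):ℝ) + 1 := by exact_mod_cast hpk
    rw [hg]
    simp only []
    rw [hpR]
    set k : ℝ := ((p/2 : ℕ):ℝ)
    have hk0 : (0:ℝ) < k := by linarith
    have e1 : 1/(4*k) - 1/(4*(k+1)) = 1/(4*k*(k+1)) := by field_simp; ring
    rw [e1]
    apply one_div_le_one_div_of_le (by positivity)
    nlinarith
  have hinj : ∀ x ∈ T, ∀ y ∈ T, x/2 = y/2 → x = y := by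
    intro x hx y hy hxy; have := (h x hx).2; have := (h y hy).2; omega
  have step2 : ∑ p ∈ T, g (p/2) = ∑ k ∈ T.image (·/2), g k := (Finset.sum_image hinj).symm
  have hg0 : ∀ k, 128 ≤ k → 0 ≤ g k := by
    intro k hk
    have : (128:ℝ) ≤ (k:ℝ) := by exact_mod_cast hk
    rw [hg]
    have : 1/(4*((k:ℝ)+1)) ≤ 1/(4*(k:ℝ)) := by apply one_div_le_one_div_of_le <;> nlinarith
    simpa using this
  set B := (T.image (·/2)).sup id + 1 with hB
  have hsub : T.image (·/2) ⊆ Finset.Ico 128 B := by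
    intro k hk
    simp only [Finset.mem_Ico]
    constructor
    · obtain ⟨p, hp, rfl⟩ := Finset.mem_image.1 hk
      have := (h p hp).1; omega
    · have := Finset.le_sup (f := id) hk
      simp only [id] at this
      omega
  have step3 : ∑ k ∈ T.image (·/2), g k ≤ ∑ k ∈ Finset.Ico 128 B, g k := by
    apply Finset.sum_le_sum_of_subset_of_nonneg hsub
    intro k hk _
    exact hg0 k (Finset.mem_Ico.1 hk).1
  have step4 : ∑ k ∈ Finset.Ico 128 B, g k ≤ 1/512 := by
    rw [Finset.sum_Ico_eq_sum_range]
    set h' : ℕ → ℝ := fun i => 1/(4*((128+i : ℕ):ℝ)) with hh'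
    have hcong : ∀ i ∈ Finset.range (B - 128), g (128 + i) = h' i - h' (i+1) := by
      intro i _
      rw [hg, hh']
      push_cast
      ring
    rw [Finset.sum_congr rfl hcong, Finset.sum_range_sub' h']
    have : (0:ℝ) ≤ h' (B - 128) := by rw [hh']; positivity
    have : h' 0 = 1/512 := by rw [hh']; norm_num
    linarith
  calc ∑ p ∈ T, 1/(p:ℝ)^2 ≤ ∑ p ∈ T, g (p/2) := step1
    _ = ∑ k ∈ T.image (·/2), g k := step2
    _ ≤ ∑ k ∈ Finset.Ico 128 B, g k := step3
    _ ≤ 1/512 := step4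

private lemma prodS256_lb_set : (Finset.range 256).filter (fun p => p.Prime ∧ 3 ≤ p) = ({3,5,7,11,13,17,19,23,29,31,37,41,43,47,53,59,61,67,71,73,79,83,89,97,101,103,107,109,113,127,131,137,139,149,151,157,163,167,173,179,181,191,193,197,199,211,223,227,229,233,239,241,251} : Finset ℕ) := by
  have h1 : @Finset.filter ℕ (fun p => p.Prime ∧ 3 ≤ p)
      (fun p => @instDecidableAnd _ _ (Nat.decidablePrime p) (Nat.decLe 3 p)) (Finset.range 256)
      = ({3,5,7,11,13,17,19,23,29,31,37,41,43,47,53,59,61,67,71,73,79,83,89,97,101,103,107,109,113,127,131,137,139,149,151,157,163,167,173,179,181,191,193,197,199,211,223,227,229,233,239,241,251} : Finset ℕ) := by decide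
  rwa [Finset.filter_congr_decidable] at h1

set_option maxHeartbeats 2000000 in
private lemma prodS256_lb : (0.313631733:ℝ) ≤ F 256 := by
  unfold F
  rw [prodS256_lb_set]
  rw [Finset.prod_insert (by decide), Finset.prod_insert (by decide), Finset.prod_insert (by decide), Finset.prod_insert (by decide), Finset.prod_insert (by decide), Finset.prod_insert (by decide), Finset.prod_insert (by decide), Finset.prod_insert (by decide), Finset.prod_insert (by decide), Finset.prod_insert (by decide), Finset.prod_insert (by decide), Finset.prod_insert (by decide), Finset.prod_insert (by decide), Finset.prod_insert (by decide), Finset.prod_insert (by decide), Finset.prod_insert (by decide), Finset.prod_insert (by decide), Finset.prod_insert (by decide), Finset.prod_insert (by decide), Finset.prod_insert (by decide), Finset.prod_insert (by decide), Finset.prod_insert (by decide), Finset.prod_insert (by decide), Finset.prod_insert (by decide), Finset.prod_insert (by decide), Finset.prod_insert (by decide), Finset.prod_insert (by decide), Finset.prod_insert (by decide), Finset.prod_insert (by decide), Finset.prod_insert (by decide), Finset.prod_insert (by decide), Finset.prod_insert (by decide), Finset.prod_insert (by decide), Finset.prod_insert (by decide), Finset.prod_insert (by decide), Finset.prod_insert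 (by decide), Finset.prod_insert (by decide), Finset.prod_insert (by decide), Finset.prod_insert (by decide), Finset.prod_insert (by decide), Finset.prod_insert (by decide), Finset.prod_insert (by decide), Finset.prod_insert (by decide), Finset.prod_insert (by decide), Finset.prod_insert (by decide), Finset.prod_insert (by decide), Finset.prod_insert (by decide), Finset.prod_insert (by decide), Finset.prod_insert (by decide), Finset.prod_insert (by decide), Finset.prod_insert (by decide), Finset.prod_insert (by decide), Finset.prod_singleton]
  push_cast
  have h3 : (0.500000000:ℝ) ≤ Real.cos (π/3) := by rw [Real.cos_pi_div_three]; norm_num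
  have h5 : (0.809016990:ℝ) ≤ Real.cos (π/5) := by rw [Real.cos_pi_div_five]; nlinarith [Real.sq_sqrt (by norm_num : (0:ℝ) ≤ 5), Real.sqrt_nonneg 5]
  have h7 : (0.900855479:ℝ) ≤ Real.cos (π/7) := cos_lb_half 7 (by norm_num) _ (by norm_num)
  have h11 : (0.959480916:ℝ) ≤ Real.cos (π/11) := cos_lb_half 11 (by norm_num) _ (by norm_num)
  have h13 : (0.970936561:ℝ) ≤ Real.cos (π/13) := cos_lb_half 13 (by norm_num) _ (by norm_num)
  have h17 : (0.982863812:ℝ) ≤ Real.cos (π/17) := cos_lb_direct 17 (by norm_num) _ (by norm_num)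
  have h19 : (0.986291254:ℝ) ≤ Real.cos (π/19) := cos_lb_direct 19 (by norm_num) _ (by norm_num)
  have h23 : (0.990653319:ℝ) ≤ Real.cos (π/23) := cos_lb_direct 23 (by norm_num) _ (by norm_num)
  have h29 : (0.994125046:ℝ) ≤ Real.cos (π/29) := cos_lb_direct 29 (by norm_num) _ (by norm_num)
  have h31 : (0.994859435:ℝ) ≤ Real.cos (π/31) := cos_lb_direct 31 (by norm_num) _ (by norm_num)
  have h37 : (0.996392615:ℝ) ≤ Real.cos (π/37) := cos_lb_direct 37 (by norm_num) _ (by norm_num)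
  have h41 : (0.997062569:ℝ) ≤ Real.cos (π/41) := cos_lb_direct 41 (by norm_num) _ (by norm_num)
  have h43 : (0.997329612:ℝ) ≤ Real.cos (π/43) := cos_lb_direct 43 (by norm_num) _ (by norm_num)
  have h47 : (0.997765006:ℝ) ≤ Real.cos (π/47) := cos_lb_direct 47 (by norm_num) _ (by norm_num)
  have h53 : (0.998242574:ℝ) ≤ Real.cos (π/53) := cos_lb_direct 53 (by norm_num) _ (by norm_num)
  have h59 : (0.998581941:ℝ) ≤ Real.cos (π/59) := cos_lb_direct 59 (by norm_num) _ (by norm_num)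
  have h61 : (0.998673430:ℝ) ≤ Real.cos (π/61) := cos_lb_direct 61 (by norm_num) _ (by norm_num)
  have h67 : (0.998900438:ℝ) ≤ Real.cos (π/67) := cos_lb_direct 67 (by norm_num) _ (by norm_num)
  have h71 : (0.999020866:ℝ) ≤ Real.cos (π/71) := cos_lb_direct 71 (by norm_num) _ (by norm_num)
  have h73 : (0.999073793:ℝ) ≤ Real.cos (π/73) := cos_lb_direct 73 (by norm_num) _ (by norm_num)
  have h79 : (0.999209162:ℝ) ≤ Real.cos (π/79) := cos_lb_direct 79 (by norm_num) _ (by norm_num)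
  have h83 : (0.999283562:ℝ) ≤ Real.cos (π/83) := cos_lb_direct 83 (by norm_num) _ (by norm_num)
  have h89 : (0.999376916:ℝ) ≤ Real.cos (π/89) := cos_lb_direct 89 (by norm_num) _ (by norm_num)
  have h97 : (0.999475465:ℝ) ≤ Real.cos (π/97) := cos_lb_direct 97 (by norm_num) _ (by norm_num)
  have h101 : (0.999516194:ℝ) ≤ Real.cos (π/101) := cos_lb_direct 101 (by norm_num) _ (by norm_num)
  have h103 : (0.999534802:ℝ) ≤ Real.cos (π/103) := cos_lb_direct 103 (by norm_num) _ (by norm_num)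
  have h107 : (0.999568936:ℝ) ≤ Real.cos (π/107) := cos_lb_direct 107 (by norm_num) _ (by norm_num)
  have h109 : (0.999584611:ℝ) ≤ Real.cos (π/109) := cos_lb_direct 109 (by norm_num) _ (by norm_num)
  have h113 : (0.999613501:ℝ) ≤ Real.cos (π/113) := cos_lb_direct 113 (by norm_num) _ (by norm_num)
  have h127 : (0.999694022:ℝ) ≤ Real.cos (π/127) := cos_lb_direct 127 (by norm_num) _ (by norm_num)
  have h131 : (0.999712423:ℝ) ≤ Real.cos (π/131) := cos_lb_direct 131 (by norm_num) _ (by norm_num)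
  have h137 : (0.999737062:ℝ) ≤ Real.cos (π/137) := cos_lb_direct 137 (by norm_num) _ (by norm_num)
  have h139 : (0.999744575:ℝ) ≤ Real.cos (π/139) := cos_lb_direct 139 (by norm_num) _ (by norm_num)
  have h149 : (0.999777711:ℝ) ≤ Real.cos (π/149) := cos_lb_direct 149 (by norm_num) _ (by norm_num)
  have h151 : (0.999783560:ℝ) ≤ Real.cos (π/151) := cos_lb_direct 151 (by norm_num) _ (by norm_num)
  have h157 : (0.999799788:ℝ) ≤ Real.cos (π/157) := cos_lb_direct 157 (by norm_num) _ (by norm_num)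
  have h163 : (0.999814257:ℝ) ≤ Real.cos (π/163) := cos_lb_direct 163 (by norm_num) _ (by norm_num)
  have h167 : (0.999823049:ℝ) ≤ Real.cos (π/167) := cos_lb_direct 167 (by norm_num) _ (by norm_num)
  have h173 : (0.999835110:ℝ) ≤ Real.cos (π/173) := cos_lb_direct 173 (by norm_num) _ (by norm_num)
  have h179 : (0.999845979:ℝ) ≤ Real.cos (π/179) := cos_lb_direct 179 (by norm_num) _ (by norm_num)
  have h181 : (0.999849364:ℝ) ≤ Real.cos (π/181) := cos_lb_direct 181 (by norm_num) _ (by norm_num)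
  have h191 : (0.999864725:ℝ) ≤ Real.cos (π/191) := cos_lb_direct 191 (by norm_num) _ (by norm_num)
  have h193 : (0.999867514:ℝ) ≤ Real.cos (π/193) := cos_lb_direct 193 (by norm_num) _ (by norm_num)
  have h197 : (0.999872840:ℝ) ≤ Real.cos (π/197) := cos_lb_direct 197 (by norm_num) _ (by norm_num)
  have h199 : (0.999875383:ℝ) ≤ Real.cos (π/199) := cos_lb_direct 199 (by norm_num) _ (by norm_num)
  have h211 : (0.999889155:ℝ) ≤ Real.cos (π/211) := cos_lb_direct 211 (by norm_num) _ (by norm_num)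
  have h223 : (0.999900764:ℝ) ≤ Real.cos (π/223) := cos_lb_direct 223 (by norm_num) _ (by norm_num)
  have h227 : (0.999904230:ℝ) ≤ Real.cos (π/227) := cos_lb_direct 227 (by norm_num) _ (by norm_num)
  have h229 : (0.999905896:ℝ) ≤ Real.cos (π/229) := cos_lb_direct 229 (by norm_num) _ (by norm_num)
  have h233 : (0.999909099:ℝ) ≤ Real.cos (π/233) := cos_lb_direct 233 (by norm_num) _ (by norm_num)
  have h239 : (0.999913606:ℝ) ≤ Real.cos (π/239) := cos_lb_direct 239 (by norm_num) _ (by norm_num)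
  have h241 : (0.999915034:ℝ) ≤ Real.cos (π/241) := cos_lb_direct 241 (by norm_num) _ (by norm_num)
  have h251 : (0.999921669:ℝ) ≤ Real.cos (π/251) := cos_lb_direct 251 (by norm_num) _ (by norm_num)
  calc (0.313631733:ℝ) ≤ (0.500000000:ℝ) * ((0.809016990:ℝ) * ((0.900855479:ℝ) * ((0.959480916:ℝ) * ((0.970936561:ℝ) * ((0.982863812:ℝ) * ((0.986291254:ℝ) * ((0.990653319:ℝ) * ((0.994125046:ℝ) * ((0.994859435:ℝ) * ((0.996392615:ℝ) * ((0.997062569:ℝ) * ((0.997329612:ℝ) * ((0.997765006:ℝ) * ((0.998242574:ℝ) * ((0.998581941:ℝ) * ((0.998673430:ℝ) * ((0.998900438:ℝ) * ((0.999020866:ℝ) * ((0.999073793:ℝ) * ((0.999209162:ℝ) * ((0.999283562:ℝ) * ((0.999376916:ℝ) * ((0.999475465:ℝ) * ((0.999516194:ℝ) * ((0.999534802:ℝ) * ((0.999568936:ℝ) * ((0.999584611:ℝ) * ((0.999613501:ℝ) * ((0.999694022:ℝ) * ((0.999712423:ℝ) * ((0.999737062:ℝ) * ((0.999744575:ℝ)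 * ((0.999777711:ℝ) * ((0.999783560:ℝ) * ((0.999799788:ℝ) * ((0.999814257:ℝ) * ((0.999823049:ℝ) * ((0.999835110:ℝ) * ((0.999845979:ℝ) * ((0.999849364:ℝ) * ((0.999864725:ℝ) * ((0.999867514:ℝ) * ((0.999872840:ℝ) * ((0.999875383:ℝ) * ((0.999889155:ℝ) * ((0.999900764:ℝ) * ((0.999904230:ℝ) * ((0.999905896:ℝ) * ((0.999909099:ℝ) * ((0.999913606:ℝ) * ((0.999915034:ℝ) * (0.999921669:ℝ)))))))))))))))))))))))))))))))))))))))))))))))))))) := by norm_num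
    _ ≤ Real.cos (π/3) * (Real.cos (π/5) * (Real.cos (π/7) * (Real.cos (π/11) * (Real.cos (π/13) * (Real.cos (π/17) * (Real.cos (π/19) * (Real.cos (π/23) * (Real.cos (π/29) * (Real.cos (π/31) * (Real.cos (π/37) * (Real.cos (π/41) * (Real.cos (π/43) * (Real.cos (π/47) * (Real.cos (π/53) * (Real.cos (π/59) * (Real.cos (π/61) * (Real.cos (π/67) * (Real.cos (π/71) * (Real.cos (π/73) * (Real.cos (π/79) * (Real.cos (π/83) * (Real.cos (π/89) * (Real.cos (π/97) * (Real.cos (π/101) * (Real.cos (π/103) * (Real.cos (π/107) * (Real.cos (π/109) * (Real.cos (π/113) * (Real.cos (π/127) * (Real.cos (π/131) * (Real.cos (π/137) * (Real.cos (π/139) * (Real.cos (π/149) * (Real.cos (π/151) * (Real.cos (π/157) * (Real.cos (π/163) * (Real.cos (π/167) * (Real.cos (π/173) * (Real.cos (π/179) * (Real.cos (π/181) * (Real.cos (π/191) * (Real.cos (π/193) * (Real.cos (π/197) * (Real.cos (π/199) * (Real.cos (π/211) * (Real.cos (π/223) * (Real.cos (π/227) * (Real.cos (π/229) * (Real.cos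 (π/233) * (Real.cos (π/239) * (Real.cos (π/241) * Real.cos (π/251)))))))))))))))))))))))))))))))))))))))))))))))))))) := ?_
  refine mul_le_mul h3 ?_ (by positivity) (cos_nn 3 (by norm_num))
  refine mul_le_mul h5 ?_ (by positivity) (cos_nn 5 (by norm_num))
  refine mul_le_mul h7 ?_ (by positivity) (cos_nn 7 (by norm_num))
  refine mul_le_mul h11 ?_ (by positivity) (cos_nn 11 (by norm_num))
  refine mul_le_mul h13 ?_ (by positivity) (cos_nn 13 (by norm_num))
  refine mul_le_mul h17 ?_ (by positivity) (cos_nn 17 (by norm_num))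
  refine mul_le_mul h19 ?_ (by positivity) (cos_nn 19 (by norm_num))
  refine mul_le_mul h23 ?_ (by positivity) (cos_nn 23 (by norm_num))
  refine mul_le_mul h29 ?_ (by positivity) (cos_nn 29 (by norm_num))
  refine mul_le_mul h31 ?_ (by positivity) (cos_nn 31 (by norm_num))
  refine mul_le_mul h37 ?_ (by positivity) (cos_nn 37 (by norm_num))
  refine mul_le_mul h41 ?_ (by positivity) (cos_nn 41 (by norm_num))
  refine mul_le_mul h43 ?_ (by positivity) (cos_nn 43 (by norm_num))
  refine mul_le_mul h47 ?_ (by positivity) (cos_nn 47 (by norm_num))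
  refine mul_le_mul h53 ?_ (by positivity) (cos_nn 53 (by norm_num))
  refine mul_le_mul h59 ?_ (by positivity) (cos_nn 59 (by norm_num))
  refine mul_le_mul h61 ?_ (by positivity) (cos_nn 61 (by norm_num))
  refine mul_le_mul h67 ?_ (by positivity) (cos_nn 67 (by norm_num))
  refine mul_le_mul h71 ?_ (by positivity) (cos_nn 71 (by norm_num))
  refine mul_le_mul h73 ?_ (by positivity) (cos_nn 73 (by norm_num))
  refine mul_le_mul h79 ?_ (by positivity) (cos_nn 79 (by norm_num))
  refine mul_le_mul h83 ?_ (by positivity) (cos_nn 83 (by norm_num))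
  refine mul_le_mul h89 ?_ (by positivity) (cos_nn 89 (by norm_num))
  refine mul_le_mul h97 ?_ (by positivity) (cos_nn 97 (by norm_num))
  refine mul_le_mul h101 ?_ (by positivity) (cos_nn 101 (by norm_num))
  refine mul_le_mul h103 ?_ (by positivity) (cos_nn 103 (by norm_num))
  refine mul_le_mul h107 ?_ (by positivity) (cos_nn 107 (by norm_num))
  refine mul_le_mul h109 ?_ (by positivity) (cos_nn 109 (by norm_num))
  refine mul_le_mul h113 ?_ (by positivity) (cos_nn 113 (by norm_num))
  refine mul_le_mul h127 ?_ (by positivity) (cos_nn 127 (by norm_num))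
  refine mul_le_mul h131 ?_ (by positivity) (cos_nn 131 (by norm_num))
  refine mul_le_mul h137 ?_ (by positivity) (cos_nn 137 (by norm_num))
  refine mul_le_mul h139 ?_ (by positivity) (cos_nn 139 (by norm_num))
  refine mul_le_mul h149 ?_ (by positivity) (cos_nn 149 (by norm_num))
  refine mul_le_mul h151 ?_ (by positivity) (cos_nn 151 (by norm_num))
  refine mul_le_mul h157 ?_ (by positivity) (cos_nn 157 (by norm_num))
  refine mul_le_mul h163 ?_ (by positivity) (cos_nn 163 (by norm_num))
  refine mul_le_mul h167 ?_ (by positivity) (cos_nn 167 (by norm_num))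
  refine mul_le_mul h173 ?_ (by positivity) (cos_nn 173 (by norm_num))
  refine mul_le_mul h179 ?_ (by positivity) (cos_nn 179 (by norm_num))
  refine mul_le_mul h181 ?_ (by positivity) (cos_nn 181 (by norm_num))
  refine mul_le_mul h191 ?_ (by positivity) (cos_nn 191 (by norm_num))
  refine mul_le_mul h193 ?_ (by positivity) (cos_nn 193 (by norm_num))
  refine mul_le_mul h197 ?_ (by positivity) (cos_nn 197 (by norm_num))
  refine mul_le_mul h199 ?_ (by positivity) (cos_nn 199 (by norm_num))
  refine mul_le_mul h211 ?_ (by positivity) (cos_nn 211 (by norm_num))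
  refine mul_le_mul h223 ?_ (by positivity) (cos_nn 223 (by norm_num))
  refine mul_le_mul h227 ?_ (by positivity) (cos_nn 227 (by norm_num))
  refine mul_le_mul h229 ?_ (by positivity) (cos_nn 229 (by norm_num))
  refine mul_le_mul h233 ?_ (by positivity) (cos_nn 233 (by norm_num))
  refine mul_le_mul h239 ?_ (by positivity) (cos_nn 239 (by norm_num))
  refine mul_le_mul h241 ?_ (by positivity) (cos_nn 241 (by norm_num))
  exact h251

private lemma prodS48_ub_set : (Finset.range 48).filter (fun p => p.Prime ∧ 3 ≤ p) = ({3,5,7,11,13,17,19,23,29,31,37,41,43,47} : Finset ℕ) := by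
  have h1 : @Finset.filter ℕ (fun p => p.Prime ∧ 3 ≤ p)
      (fun p => @instDecidableAnd _ _ (Nat.decidablePrime p) (Nat.decLe 3 p)) (Finset.range 48)
      = ({3,5,7,11,13,17,19,23,29,31,37,41,43,47} : Finset ℕ) := by decide
  rwa [Finset.filter_congr_decidable] at h1

set_option maxHeartbeats 2000000 in
private lemma prodS48_ub : F 48 ≤ (0.319:ℝ) := by
  unfold F
  rw [prodS48_ub_set]
  rw [Finset.prod_insert (by decide), Finset.prod_insert (by decide), Finset.prod_insert (by decide), Finset.prod_insert (by decide), Finset.prod_insert (by decide), Finset.prod_insert (by decide), Finset.prod_insert (by decide), Finset.prod_insert (by decide), Finset.prod_insert (by decide), Finset.prod_insert (by decide), Finset.prod_insert (by decide), Finset.prod_insert (by decide), Finset.prod_insert (by decide), Finset.prod_singleton]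
  push_cast
  have h3 : Real.cos (π/3) ≤ (0.500000000:ℝ) := by rw [Real.cos_pi_div_three]; norm_num
  have h5 : Real.cos (π/5) ≤ (0.809017000:ℝ) := by rw [Real.cos_pi_div_five]; nlinarith [Real.sq_sqrt (by norm_num : (0:ℝ) ≤ 5), Real.sqrt_nonneg 5]
  have h7 : Real.cos (π/7) ≤ (0.901090637:ℝ) := cos_ub_half 7 (by norm_num) _ (by norm_num) (by norm_num)
  have h11 : Real.cos (π/11) ≤ (0.959505600:ℝ) := cos_ub_half 11 (by norm_num) _ (by norm_num) (by norm_num)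
  have h13 : Real.cos (π/13) ≤ (0.970947286:ℝ) := cos_ub_half 13 (by norm_num) _ (by norm_num) (by norm_num)
  have h17 : Real.cos (π/17) ≤ (0.982985311:ℝ) := cos_ub_direct 17 (by norm_num) _ (by norm_num)
  have h19 : Real.cos (π/19) ≤ (0.986369124:ℝ) := cos_ub_direct 19 (by norm_num) _ (by norm_num)
  have h23 : Real.cos (π/23) ≤ (0.990689585:ℝ) := cos_ub_direct 23 (by norm_num) _ (by norm_num)
  have h29 : Real.cos (π/29) ≤ (0.994139397:ℝ) := cos_ub_direct 29 (by norm_num) _ (by norm_num)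
  have h31 : Real.cos (π/31) ≤ (0.994870426:ℝ) := cos_ub_direct 31 (by norm_num) _ (by norm_num)
  have h37 : Real.cos (π/37) ≤ (0.996398032:ℝ) := cos_ub_direct 37 (by norm_num) _ (by norm_num)
  have h41 : Real.cos (π/41) ≤ (0.997066162:ℝ) := cos_ub_direct 41 (by norm_num) _ (by norm_num)
  have h43 : Real.cos (π/43) ≤ (0.997332582:ℝ) := cos_ub_direct 43 (by norm_num) _ (by norm_num)
  have h47 : Real.cos (π/47) ≤ (0.997767088:ℝ) := cos_ub_direct 47 (by norm_num) _ (by norm_num)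
  have nn47 : (0:ℝ) ≤ Real.cos (π/47) := cos_nn 47 (by norm_num)
  have nn43 : (0:ℝ) ≤ Real.cos (π/43) * Real.cos (π/47) := mul_nonneg (cos_nn 43 (by norm_num)) nn47
  have nn41 : (0:ℝ) ≤ Real.cos (π/41) * (Real.cos (π/43) * Real.cos (π/47)) := mul_nonneg (cos_nn 41 (by norm_num)) nn43
  have nn37 : (0:ℝ) ≤ Real.cos (π/37) * (Real.cos (π/41) * (Real.cos (π/43) * Real.cos (π/47))) := mul_nonneg (cos_nn 37 (by norm_num)) nn41
  have nn31 : (0:ℝ) ≤ Real.cos (π/31) * (Real.cos (π/37) * (Real.cos (π/41) * (Real.cos (π/43) * Real.cos (π/47)))) := mul_nonneg (cos_nn 31 (by norm_num)) nn37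
  have nn29 : (0:ℝ) ≤ Real.cos (π/29) * (Real.cos (π/31) * (Real.cos (π/37) * (Real.cos (π/41) * (Real.cos (π/43) * Real.cos (π/47))))) := mul_nonneg (cos_nn 29 (by norm_num)) nn31
  have nn23 : (0:ℝ) ≤ Real.cos (π/23) * (Real.cos (π/29) * (Real.cos (π/31) * (Real.cos (π/37) * (Real.cos (π/41) * (Real.cos (π/43) * Real.cos (π/47)))))) := mul_nonneg (cos_nn 23 (by norm_num)) nn29
  have nn19 : (0:ℝ) ≤ Real.cos (π/19) * (Real.cos (π/23) * (Real.cos (π/29) * (Real.cos (π/31) * (Real.cos (π/37) * (Real.cos (π/41) * (Real.cos (π/43) * Real.cos (π/47))))))) := mul_nonneg (cos_nn 19 (by norm_num)) nn23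
  have nn17 : (0:ℝ) ≤ Real.cos (π/17) * (Real.cos (π/19) * (Real.cos (π/23) * (Real.cos (π/29) * (Real.cos (π/31) * (Real.cos (π/37) * (Real.cos (π/41) * (Real.cos (π/43) * Real.cos (π/47)))))))) := mul_nonneg (cos_nn 17 (by norm_num)) nn19
  have nn13 : (0:ℝ) ≤ Real.cos (π/13) * (Real.cos (π/17) * (Real.cos (π/19) * (Real.cos (π/23) * (Real.cos (π/29) * (Real.cos (π/31) * (Real.cos (π/37) * (Real.cos (π/41) * (Real.cos (π/43) * Real.cos (π/47))))))))) := mul_nonneg (cos_nn 13 (by norm_num)) nn17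
  have nn11 : (0:ℝ) ≤ Real.cos (π/11) * (Real.cos (π/13) * (Real.cos (π/17) * (Real.cos (π/19) * (Real.cos (π/23) * (Real.cos (π/29) * (Real.cos (π/31) * (Real.cos (π/37) * (Real.cos (π/41) * (Real.cos (π/43) * Real.cos (π/47)))))))))) := mul_nonneg (cos_nn 11 (by norm_num)) nn13
  have nn7 : (0:ℝ) ≤ Real.cos (π/7) * (Real.cos (π/11) * (Real.cos (π/13) * (Real.cos (π/17) * (Real.cos (π/19) * (Real.cos (π/23) * (Real.cos (π/29) * (Real.cos (π/31) * (Real.cos (π/37) * (Real.cos (π/41) * (Real.cos (π/43) * Real.cos (π/47))))))))))) := mul_nonneg (cos_nn 7 (by norm_num)) nn11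
  have nn5 : (0:ℝ) ≤ Real.cos (π/5) * (Real.cos (π/7) * (Real.cos (π/11) * (Real.cos (π/13) * (Real.cos (π/17) * (Real.cos (π/19) * (Real.cos (π/23) * (Real.cos (π/29) * (Real.cos (π/31) * (Real.cos (π/37) * (Real.cos (π/41) * (Real.cos (π/43) * Real.cos (π/47)))))))))))) := mul_nonneg (cos_nn 5 (by norm_num)) nn7
  calc Real.cos (π/3) * (Real.cos (π/5) * (Real.cos (π/7) * (Real.cos (π/11) * (Real.cos (π/13) * (Real.cos (π/17) * (Real.cos (π/19) * (Real.cos (π/23) * (Real.cos (π/29) * (Real.cos (π/31) * (Real.cos (π/37) * (Real.cos (π/41) * (Real.cos (π/43) * Real.cos (π/47))))))))))))) ≤ (0.500000000:ℝ) * ((0.809017000:ℝ) * ((0.901090637:ℝ) * ((0.959505600:ℝ) * ((0.970947286:ℝ) * ((0.982985311:ℝ) * ((0.986369124:ℝ) * ((0.990689585:ℝ) * ((0.994139397:ℝ) * ((0.994870426:ℝ) * ((0.996398032:ℝ) * ((0.997066162:ℝ) * ((0.997332582:ℝ) * (0.997767088:ℝ))))))))))))) := ?_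
    _ ≤ (0.319:ℝ) := by norm_num
  refine mul_le_mul h3 ?_ nn5 (by positivity)
  refine mul_le_mul h5 ?_ nn7 (by positivity)
  refine mul_le_mul h7 ?_ nn11 (by positivity)
  refine mul_le_mul h11 ?_ nn13 (by positivity)
  refine mul_le_mul h13 ?_ nn17 (by positivity)
  refine mul_le_mul h17 ?_ nn19 (by positivity)
  refine mul_le_mul h19 ?_ nn23 (by positivity)
  refine mul_le_mul h23 ?_ nn29 (by positivity)
  refine mul_le_mul h29 ?_ nn31 (by positivity)
  refine mul_le_mul h31 ?_ nn37 (by positivity)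
  refine mul_le_mul h37 ?_ nn41 (by positivity)
  refine mul_le_mul h41 ?_ nn43 (by positivity)
  refine mul_le_mul h43 ?_ nn47 (by positivity)
  exact h47


private lemma Fmem {n p : ℕ} (hp : p ∈ (Finset.range n).filter (fun p => p.Prime ∧ 3 ≤ p)) :
    p.Prime ∧ 3 ≤ p ∧ p < n := by
  simp only [Finset.mem_filter, Finset.mem_range] at hp
  exact ⟨hp.2.1, hp.2.2, hp.1⟩

private lemma Fnn (n : ℕ) : 0 ≤ F n :=
  Finset.prod_nonneg fun p hp => cos_nn _ (by exact_mod_cast (Fmem hp).2.1)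

private lemma Fanti : Antitone F := by
  intro a b hab
  have hsub : (Finset.range a).filter (fun p => p.Prime ∧ 3 ≤ p) ⊆
      (Finset.range b).filter (fun p => p.Prime ∧ 3 ≤ p) :=
    Finset.filter_subset_filter _ (Finset.range_subset_range.mpr hab)
  have hdecomp : (∏ p ∈ ((Finset.range b).filter (fun p => p.Prime ∧ 3 ≤ p)) \
      ((Finset.range a).filter (fun p => p.Prime ∧ 3 ≤ p)), Real.cos (π / p)) *
      ∏ p ∈ (Finset.range a).filter (fun p => p.Prime ∧ 3 ≤ p), Real.cos (π / p) =
      ∏ p ∈ (Finset.range b).filter (fun p => p.Prime ∧ 3 ≤ p), Real.cos (π / p) :=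
    Finset.prod_sdiff hsub
  have h1 : ∏ p ∈ ((Finset.range b).filter (fun p => p.Prime ∧ 3 ≤ p)) \
      ((Finset.range a).filter (fun p => p.Prime ∧ 3 ≤ p)), Real.cos (π / p) ≤ 1 :=
    Finset.prod_le_one
      (fun p hp => cos_nn _ (by exact_mod_cast (Fmem (Finset.mem_sdiff.1 hp).1).2.1))
      (fun p hp => Real.cos_le_one _)
  have h0 : (0:ℝ) ≤ ∏ p ∈ ((Finset.range b).filter (fun p => p.Prime ∧ 3 ≤ p)) \
      ((Finset.range a).filter (fun p => p.Prime ∧ 3 ≤ p)), Real.cos (π / p) :=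
    Finset.prod_nonneg fun p hp => cos_nn _ (by exact_mod_cast (Fmem (Finset.mem_sdiff.1 hp).1).2.1)
  have hFa : (0:ℝ) ≤ ∏ p ∈ (Finset.range a).filter (fun p => p.Prime ∧ 3 ≤ p),
      Real.cos (π / p) := Fnn a
  show F b ≤ F a
  unfold F
  rw [← hdecomp]
  nlinarith [hFa, h1, h0]

private lemma Flb (n : ℕ) : (0.3102:ℝ) ≤ F n := by
  rcases le_or_gt n 256 with h | h
  · calc (0.3102:ℝ) ≤ 0.313631733 := by norm_num
      _ ≤ F 256 := prodS256_lb
      _ ≤ F n := Fanti h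
  · have hsub : (Finset.range 256).filter (fun p => p.Prime ∧ 3 ≤ p) ⊆
        (Finset.range n).filter (fun p => p.Prime ∧ 3 ≤ p) :=
      Finset.filter_subset_filter _ (Finset.range_subset_range.mpr h.le)
    set T := ((Finset.range n).filter (fun p => p.Prime ∧ 3 ≤ p)) \
        ((Finset.range 256).filter (fun p => p.Prime ∧ 3 ≤ p)) with hT
    have hdecomp : (∏ p ∈ T, Real.cos (π / p)) *
        (∏ p ∈ (Finset.range 256).filter (fun p => p.Prime ∧ 3 ≤ p), Real.cos (π / p)) =
        ∏ p ∈ (Finset.range n).filter (fun p => p.Prime ∧ 3 ≤ p), Real.cos (π / p) := by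
      rw [hT]; exact Finset.prod_sdiff hsub
    have hTmem : ∀ p ∈ T, 257 ≤ p ∧ p % 2 = 1 := by
      intro p hp
      rw [hT, Finset.mem_sdiff] at hp
      obtain ⟨hp1, hp2⟩ := hp
      obtain ⟨hprime, h3, -⟩ := Fmem hp1
      simp only [Finset.mem_filter, Finset.mem_range] at hp2
      have h256 : 256 ≤ p := by
        by_contra hc
        exact hp2 ⟨by omega, hprime, h3⟩
      have hodd : p % 2 = 1 := Nat.odd_iff.1 (hprime.odd_of_ne_two (by omega))
      exact ⟨by omega, hodd⟩
    -- tail product bound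
    set e : ℕ → ℝ := fun p => π^2/2 * (1/(p:ℝ)^2) with he
    have he0 : ∀ p ∈ T, 0 ≤ e p := by
      intro p hp; rw [he]; positivity
    have hπ2 : π^2 ≤ 9.8697 := by nlinarith [pi_lt_d6, pi_pos]
    have he1 : ∀ p ∈ T, e p ≤ 1 := by
      intro p hp
      have h257 : (257:ℝ) ≤ (p:ℝ) := by exact_mod_cast (hTmem p hp).1
      rw [he]
      have : 1/(p:ℝ)^2 ≤ 1/257^2 := by
        apply one_div_le_one_div_of_le (by norm_num)
        nlinarith
      nlinarith
    have hcos_ge : ∀ p ∈ T, 1 - e p ≤ Real.cos (π / p) := by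
      intro p hp
      have h257 : (257:ℝ) ≤ (p:ℝ) := by exact_mod_cast (hTmem p hp).1
      have hp0 : (p:ℝ) ≠ 0 := by positivity
      have := Real.one_sub_sq_div_two_le_cos (x := π / p)
      have heq : (π/(p:ℝ))^2/2 = e p := by rw [he]; field_simp
      linarith [heq ▸ this]
    have hprod1 : ∏ p ∈ T, (1 - e p) ≤ ∏ p ∈ T, Real.cos (π / p) := by
      apply Finset.prod_le_prod _ hcos_ge
      intro p hp
      have := he1 p hp
      linarith
    have hsum : ∑ p ∈ T, e p ≤ 9.8697/1024 := by
      have : ∑ p ∈ T, e p = π^2/2 * ∑ p ∈ T, 1/(p:ℝ)^2 := by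
        rw [he, Finset.mul_sum]
      rw [this]
      have h1 := sum_inv_sq_le' T hTmem
      have h2 : (0:ℝ) ≤ ∑ p ∈ T, 1/(p:ℝ)^2 := Finset.sum_nonneg fun p hp => by positivity
      nlinarith [pi_pos]
    have hprod2 : (1:ℝ) - 9.8697/1024 ≤ ∏ p ∈ T, (1 - e p) := by
      have := one_sub_sum_le_prod' T e he0 he1
      linarith
    have hTnn : (0:ℝ) ≤ ∏ p ∈ T, Real.cos (π / p) :=
      Finset.prod_nonneg fun p hp => by
        have h257 : (257:ℝ) ≤ (p:ℝ) := by exact_mod_cast (hTmem p hp).1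
        exact cos_nn _ (by linarith)
    have hkey : F n = (∏ p ∈ T, Real.cos (π / p)) * F 256 := by
      unfold F; rw [← hdecomp]
    rw [hkey]
    have hA := prodS256_lb
    have h256nn := Fnn 256
    calc (0.3102:ℝ) ≤ (1 - 9.8697/1024) * 0.313631733 := by norm_num
      _ ≤ (∏ p ∈ T, Real.cos (π / p)) * F 256 := by
          apply mul_le_mul (by linarith) hA (by norm_num) hTnn
    
theorem cos_prod_primes_bounds :
    ∃ L : ℝ,
      Tendsto
        (fun n : ℕ =>
          ∏ p ∈ (Finset.range n).filter (fun p => p.Prime ∧ 3 ≤ p), Real.cos (π / p))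
        atTop (nhds L) ∧ 0.31 < L ∧ L < 0.32 := by
  have hbdd : BddBelow (Set.range F) := by
    refine ⟨0, ?_⟩
    rintro x ⟨n, rfl⟩
    exact Fnn n
  refine ⟨⨅ n, F n, tendsto_atTop_ciInf Fanti hbdd, ?_, ?_⟩
  · have : (0.3102:ℝ) ≤ ⨅ n, F n := le_ciInf Flb
    norm_num at this ⊢
    linarith
  · have h1 : (⨅ n, F n) ≤ F 48 := ciInf_le hbdd 48
    have h2 := prodS48_ub
    norm_num at h2 ⊢
    linarith
end
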